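/- arXiv:1908.05912 — 2 statements merged into one kernel-verified Lean document; each statement's English description precedes it below -/
import Mathlib

section
/- Let B : H → H be μ-Lipschitz and let x_{n-1}, x_n, x_{n+1} ∈ H. Set y_n = 2x_n - x_{n-1} and y_{n-1} = 2x_{n-1} - x_{n-2} for some x_{n-2}. Then ⟨B y_n - B y_{n-1}, y_n - x_{n+1}⟩ ≤ (μ(1+√2)/2)‖x_n - y_n‖² + (μ/2)‖x_n - y_{n-1}‖² + (μ√2/2)‖x_{n+1} - y_n‖². -/
open RealInnerProductSpace

theorem stmt7 {H : Type*} [NormedAddCommGroup H] [InnerProductSpace ℝ H] [CompleteSpace H]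
    (B : H → H) (μ : ℝ) (hμ : 0 < μ)
    (hB : ∀ x y : H, ‖B x - B y‖ ≤ μ * ‖x - y‖)
    (xm2 xm1 x0 x1 y0 ym1 : H)
    (hy0 : y0 = 2 • x0 - xm1) (hym1 : ym1 = 2 • xm1 - xm2) :
    ⟪B y0 - B ym1, y0 - x1⟫ ≤
      (μ * (1 + Real.sqrt 2) / 2) * ‖x0 - y0‖ ^ 2 + (μ / 2) * ‖x0 - ym1‖ ^ 2 +
        (μ * Real.sqrt 2 / 2) * ‖x1 - y0‖ ^ 2 := by
  set a := ‖x0 - y0‖ with ha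
  set b := ‖x0 - ym1‖ with hb
  set c := ‖x1 - y0‖ with hc
  have h1 : ⟪B y0 - B ym1, y0 - x1⟫ ≤ ‖B y0 - B ym1‖ * ‖y0 - x1‖ :=
    real_inner_le_norm _ _
  have h2 : ‖B y0 - B ym1‖ ≤ μ * ‖y0 - ym1‖ := hB _ _
  have h3 : ‖y0 - ym1‖ ≤ a + b := by
    calc ‖y0 - ym1‖ = ‖(y0 - x0) + (x0 - ym1)‖ := by rw [sub_add_sub_cancel]
      _ ≤ ‖y0 - x0‖ + ‖x0 - ym1‖ := norm_add_le _ _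
      _ = a + b := by rw [norm_sub_rev]
  have h4 : ‖y0 - x1‖ = c := norm_sub_rev _ _
  have ha0 : 0 ≤ a := norm_nonneg _
  have hb0 : 0 ≤ b := norm_nonneg _
  have hc0 : 0 ≤ c := norm_nonneg _
  have hs : Real.sqrt 2 ^ 2 = 2 := Real.sq_sqrt (by norm_num)
  have hs1 : (1:ℝ) ≤ Real.sqrt 2 := by
    nlinarith [Real.sqrt_nonneg 2]
  have key : ⟪B y0 - B ym1, y0 - x1⟫ ≤ μ * (a + b) * c := by
    calc ⟪B y0 - B ym1, y0 - x1⟫ ≤ ‖B y0 - B ym1‖ * ‖y0 - x1‖ := h1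
      _ ≤ (μ * ‖y0 - ym1‖) * ‖y0 - x1‖ := by
          apply mul_le_mul_of_nonneg_right h2 (norm_nonneg _)
      _ = μ * ‖y0 - ym1‖ * c := by rw [h4]
      _ ≤ μ * (a + b) * c := by
          apply mul_le_mul_of_nonneg_right _ hc0
          exact mul_le_mul_of_nonneg_left h3 hμ.le
  refine key.trans ?_
  have hexp : (μ * (1 + Real.sqrt 2) / 2) * a ^ 2 + (μ / 2) * b ^ 2 +
      (μ * Real.sqrt 2 / 2) * c ^ 2 - μ * (a + b) * c =
      (μ * (1 + Real.sqrt 2) / 2) * (a - (Real.sqrt 2 - 1) * c) ^ 2 +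
      (μ / 2) * (b - c) ^ 2 := by
    linear_combination (μ * a * c - (μ / 2) * (Real.sqrt 2 - 1) * c ^ 2) * hs
  have h5 : 0 ≤ (μ * (1 + Real.sqrt 2) / 2) * (a - (Real.sqrt 2 - 1) * c) ^ 2 +
      (μ / 2) * (b - c) ^ 2 := by positivity
  linarith
end

section
/- Let A : H → Set H be maximally monotone and B : H → H be monotone and μ-Lipschitz with μ ≥ 0. Then A + B (defined by (A+B)x = {u + Bx : u ∈ A x}) is maximally monotone. -/
open RealInnerProductSpace

/-- A set-valued operator on a real Hilbert space is monotone. -/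
def IsMonotoneOp {H : Type*} [NormedAddCommGroup H] [InnerProductSpace ℝ H]
    (A : H → Set H) : Prop :=
  ∀ x y u v, u ∈ A x → v ∈ A y → 0 ≤ ⟪x - y, u - v⟫

/-- A set-valued operator is maximally monotone: it is monotone and its graph is not
properly contained in the graph of any monotone operator. -/
def IsMaxMonotoneOp {H : Type*} [NormedAddCommGroup H] [InnerProductSpace ℝ H]
    (A : H → Set H) : Prop :=
  IsMonotoneOp A ∧ ∀ B : H → Set H, IsMonotoneOp B → (∀ x, A x ⊆ B x) → ∀ x, A x = B x

/-!
Minty's theorem says that a monotone operator `M` on a Hilbert space is maximal iff `I + γM` is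
surjective for some (equivalently every) `γ > 0`. Solving `x + γ (a + B x) = z` with `a ∈ A x` is
the fixed-point problem `x = J (z - γ B x)` for the resolvent `J` of `γA`, which is nonexpansive,
so the map is a contraction once `γμ < 1` and Banach's theorem applies.

The surjectivity half of Minty's theorem is proved variationally: `r + ‖x‖²/2 + ‖u‖²/2` attains
its minimum on the (closed, convex) epigraph of the Fitzpatrick function of `M`, and the
minimiser `(x, u, r)` satisfies `-x ∈ M (-u)` and `x + u = 0`.
-/

section MonotoneOperator

variable {H : Type*} [NormedAddCommGroup H] [InnerProductSpace ℝ H] {M : H → Set H}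

theorem IsMaxMonotoneOp.mem_of_forall_inner_nonneg (hM : IsMaxMonotoneOp M) {x u : H}
    (h : ∀ y v, v ∈ M y → 0 ≤ ⟪x - y, u - v⟫) : u ∈ M x := by
  have hmono : IsMonotoneOp fun z => M z ∪ {w | z = x ∧ w = u} := by
    rintro a b p q (hp | ⟨rfl, rfl⟩) (hq | ⟨rfl, rfl⟩)
    · exact hM.1 a b p q hp hq
    · simpa only [← neg_sub a, ← neg_sub p, inner_neg_neg] using h a p hp
    · exact h b q hq
    · simp
  rw [hM.2 _ hmono (fun z => Set.subset_union_left) x]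
  exact Or.inr ⟨rfl, rfl⟩

theorem IsMonotoneOp.isMaxMonotoneOp_of_forall_inner_nonneg (hM : IsMonotoneOp M)
    (h : ∀ x u, (∀ y v, v ∈ M y → 0 ≤ ⟪x - y, u - v⟫) → u ∈ M x) : IsMaxMonotoneOp M :=
  ⟨hM, fun _ hC hMC x => (hMC x).antisymm fun u hu =>
    h x u fun y v hv => hC x y u v hu (hMC y hv)⟩

theorem IsMaxMonotoneOp.exists_mem (hM : IsMaxMonotoneOp M) : ∃ x u, u ∈ M x := by
  by_contra! h
  exact h 0 0 (hM.mem_of_forall_inner_nonneg fun y v hv => (h y v hv).elim)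

theorem IsMaxMonotoneOp.image_smul_add (hM : IsMaxMonotoneOp M) {γ : ℝ} (hγ : 0 < γ) (c : H) :
    IsMaxMonotoneOp fun x => (fun u => γ • u + c) '' M x := by
  refine IsMonotoneOp.isMaxMonotoneOp_of_forall_inner_nonneg ?_ fun x w h => ?_
  · rintro x y _ _ ⟨p, hp, rfl⟩ ⟨q, hq, rfl⟩
    rw [add_sub_add_right_eq_sub, ← smul_sub, real_inner_smul_right]
    exact mul_nonneg hγ.le (hM.1 x y p q hp hq)
  · refine ⟨γ⁻¹ • (w - c), hM.mem_of_forall_inner_nonneg fun y v hv => ?_, ?_⟩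
    · have h' := h y (γ • v + c) ⟨v, hv, rfl⟩
      rw [show w - (γ • v + c) = γ • (γ⁻¹ • (w - c) - v) by
        rw [smul_sub, smul_inv_smul₀ hγ.ne']; abel, real_inner_smul_right] at h'
      exact nonneg_of_mul_nonneg_right h' hγ
    · simp [smul_inv_smul₀ hγ.ne']

theorem IsMonotoneOp.isMaxMonotoneOp_of_forall_exists_add_smul_eq (hM : IsMonotoneOp M)
    {γ : ℝ} (hγ : 0 < γ) (hsurj : ∀ z, ∃ x, ∃ u ∈ M x, x + γ • u = z) : IsMaxMonotoneOp M := by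
  refine hM.isMaxMonotoneOp_of_forall_inner_nonneg fun x w h => ?_
  obtain ⟨y, v, hv, hyv⟩ := hsurj (x + γ • w)
  have hxy : x - y = γ • (v - w) := by
    rw [smul_sub, sub_eq_sub_iff_add_eq_add, ← hyv]; abel
  have h' := h y v hv
  rw [hxy, real_inner_smul_left, ← neg_sub v w, inner_neg_right, real_inner_self_eq_norm_sq] at h'
  have hvw : v = w := by
    have h0 : ‖v - w‖ ^ 2 ≤ 0 := by nlinarith
    rw [← sub_eq_zero, ← norm_eq_zero]
    exact (pow_eq_zero_iff two_ne_zero).1 (h0.antisymm (sq_nonneg _))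
  obtain rfl : x = y := by rw [← sub_eq_zero, hxy, hvw, sub_self, smul_zero]
  rwa [← hvw]

theorem IsMonotoneOp.lipschitzWith_one_of_add_smul_eq (hM : IsMonotoneOp M) {γ : ℝ}
    (hγ : 0 ≤ γ) {J W : H → H} (hW : ∀ z, W z ∈ M (J z)) (hJ : ∀ z, J z + γ • W z = z) :
    LipschitzWith 1 J := by
  refine LipschitzWith.of_dist_le_mul fun z z' => ?_
  rw [NNReal.coe_one, one_mul, dist_eq_norm, dist_eq_norm]
  have hz : z - z' = (J z - J z') + γ • (W z - W z') := by
    conv_lhs => rw [← hJ z, ← hJ z']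
    rw [smul_sub]; abel
  have hsq : ‖J z - J z'‖ ^ 2 ≤ ‖J z - J z'‖ * ‖z - z'‖ :=
    calc ‖J z - J z'‖ ^ 2
        ≤ ‖J z - J z'‖ ^ 2 + γ * ⟪J z - J z', W z - W z'⟫ :=
          le_add_of_nonneg_right (mul_nonneg hγ (hM _ _ _ _ (hW z) (hW z')))
      _ = ⟪J z - J z', z - z'⟫ := by
          rw [hz, inner_add_right, real_inner_smul_right, real_inner_self_eq_norm_sq]
      _ ≤ ‖J z - J z'‖ * ‖z - z'‖ := real_inner_le_norm _ _
  nlinarith [norm_nonneg (J z - J z'), norm_nonneg (z - z')]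

end MonotoneOperator

section Fitzpatrick

variable {H : Type*} [NormedAddCommGroup H] [InnerProductSpace ℝ H] {M : H → Set H}

/-- The epigraph of the Fitzpatrick function
`(x, u) ↦ ⨆ (y, v) ∈ graph M, ⟪x, v⟫ + ⟪y, u⟫ - ⟪y, v⟫`, which may take the value `+∞`. -/
def fitzpatrickEpigraph (M : H → Set H) : Set (H × H × ℝ) :=
  {p | ∀ y v, v ∈ M y → ⟪p.1, v⟫ + ⟪y, p.2.1⟫ - ⟪y, v⟫ ≤ p.2.2}

theorem convex_fitzpatrickEpigraph : Convex ℝ (fitzpatrickEpigraph M) := by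
  intro p hp q hq a b ha hb hab y v hv
  have hp' := mul_le_mul_of_nonneg_left (hp y v hv) ha
  have hq' := mul_le_mul_of_nonneg_left (hq y v hv) hb
  simp only [Prod.fst_add, Prod.snd_add, Prod.smul_fst, Prod.smul_snd, smul_eq_mul,
    inner_add_left, inner_add_right, real_inner_smul_left, real_inner_smul_right]
  linear_combination hp' + hq' + ⟪y, v⟫ * hab

theorem isClosed_fitzpatrickEpigraph : IsClosed (fitzpatrickEpigraph M) := by
  simp only [fitzpatrickEpigraph, Set.ofPred_forall]
  exact isClosed_iInter fun y => isClosed_iInter fun v => isClosed_iInter fun _ =>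
    isClosed_le (by fun_prop) (by fun_prop)

theorem IsMonotoneOp.mk_mem_fitzpatrickEpigraph (hM : IsMonotoneOp M) {y v : H} (hv : v ∈ M y) :
    (y, v, ⟪y, v⟫) ∈ fitzpatrickEpigraph M := by
  intro y' v' hv'
  have h := hM y y' v v' hv hv'
  simp only [inner_sub_left, inner_sub_right] at h
  linarith

theorem IsMaxMonotoneOp.inner_le_of_mem_fitzpatrickEpigraph (hM : IsMaxMonotoneOp M)
    {p : H × H × ℝ} (hp : p ∈ fitzpatrickEpigraph M) : ⟪p.1, p.2.1⟫ ≤ p.2.2 := by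
  by_contra! hlt
  refine (hp p.1 p.2.1 (hM.mem_of_forall_inner_nonneg fun y v hv => ?_)).not_gt (by linarith)
  have h := hp y v hv
  simp only [inner_sub_left, inner_sub_right]
  linarith

end Fitzpatrick

section Energy

variable {H : Type*} [NormedAddCommGroup H] [InnerProductSpace ℝ H]

noncomputable def pairEnergy (p : H × H × ℝ) : ℝ := p.2.2 + ‖p.1‖ ^ 2 / 2 + ‖p.2.1‖ ^ 2 / 2

theorem pairEnergy_add_smul_sub (p q : H × H × ℝ) (t : ℝ) :
    pairEnergy (p + t • (q - p)) = pairEnergy p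
      + t * (q.2.2 - p.2.2 + ⟪p.1, q.1 - p.1⟫ + ⟪p.2.1, q.2.1 - p.2.1⟫)
      + t ^ 2 * ((‖q.1 - p.1‖ ^ 2 + ‖q.2.1 - p.2.1‖ ^ 2) / 2) := by
  simp only [pairEnergy, Prod.fst_add, Prod.snd_add, Prod.smul_fst, Prod.smul_snd, Prod.fst_sub,
    Prod.snd_sub, smul_eq_mul, norm_add_sq_real, norm_smul, real_inner_smul_right, mul_pow,
    Real.norm_eq_abs, sq_abs]
  ring

theorem pairEnergy_midpoint (p q : H × H × ℝ) :
    pairEnergy (p + (1 / 2 : ℝ) • (q - p)) + (‖q.1 - p.1‖ ^ 2 + ‖q.2.1 - p.2.1‖ ^ 2) / 8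
      = (pairEnergy p + pairEnergy q) / 2 := by
  have hq := pairEnergy_add_smul_sub p q 1
  rw [one_smul, add_sub_cancel] at hq
  rw [pairEnergy_add_smul_sub, hq]
  ring

theorem exists_isMinOn_pairEnergy [CompleteSpace H] {K : Set (H × H × ℝ)} (hne : K.Nonempty)
    (hconv : Convex ℝ K) (hclosed : IsClosed K) (hbdd : BddBelow (pairEnergy '' K)) :
    ∃ p ∈ K, IsMinOn pairEnergy K p := by
  obtain ⟨e, he_anti, he_lim, he_mem⟩ := exists_seq_tendsto_sInf (hne.image pairEnergy) hbdd
  set β := sInf (pairEnergy '' K)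
  have hβ : ∀ q ∈ K, β ≤ pairEnergy q := fun q hq => csInf_le hbdd ⟨q, hq, rfl⟩
  choose p hpK hpe using he_mem
  have hsq : ∀ n m N, N ≤ n → N ≤ m →
      ‖(p n).1 - (p m).1‖ ^ 2 + ‖(p n).2.1 - (p m).2.1‖ ^ 2 ≤ 8 * (e N - β) := by
    intro n m N hn hm
    have hmid := hβ _
      (hconv.add_smul_sub_mem (hpK m) (hpK n) (t := 1 / 2) ⟨by norm_num, by norm_num⟩)
    have := pairEnergy_midpoint (p m) (p n)
    linarith [he_anti hn, he_anti hm, hpe n, hpe m]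
  have hbound : Filter.Tendsto (fun N => √(8 * (e N - β))) Filter.atTop (nhds 0) := by
    simpa using ((he_lim.sub_const β).const_mul 8).sqrt
  have hcauchy : ∀ Y : ℕ → H, (∀ n m N, N ≤ n → N ≤ m → ‖Y n - Y m‖ ^ 2 ≤ 8 * (e N - β)) →
      CauchySeq Y := fun Y hY => cauchySeq_of_le_tendsto_0 _ (fun n m N hn hm => by
        simpa [dist_eq_norm] using Real.abs_le_sqrt (hY n m N hn hm)) hbound
  obtain ⟨x, hx⟩ := cauchySeq_tendsto_of_complete
    (hcauchy (fun n => (p n).1) fun n m N hn hm => by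
      nlinarith [hsq n m N hn hm, sq_nonneg ‖(p n).2.1 - (p m).2.1‖])
  obtain ⟨u, hu⟩ := cauchySeq_tendsto_of_complete
    (hcauchy (fun n => (p n).2.1) fun n m N hn hm => by
      nlinarith [hsq n m N hn hm, sq_nonneg ‖(p n).1 - (p m).1‖])
  have hr : Filter.Tendsto (fun n => (p n).2.2) Filter.atTop
      (nhds (β - ‖x‖ ^ 2 / 2 - ‖u‖ ^ 2 / 2)) := by
    refine (((he_lim.sub ((hx.norm.pow 2).div_const 2)).sub ((hu.norm.pow 2).div_const 2))).congr
      fun n => ?_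
    rw [← hpe n, pairEnergy]
    ring
  refine ⟨(x, u, β - ‖x‖ ^ 2 / 2 - ‖u‖ ^ 2 / 2),
    hclosed.mem_of_tendsto (hx.prodMk_nhds (hu.prodMk_nhds hr)) (.of_forall hpK),
    isMinOn_iff.2 fun q hq => ?_⟩
  calc pairEnergy (x, u, β - ‖x‖ ^ 2 / 2 - ‖u‖ ^ 2 / 2) = β := by simp only [pairEnergy]; ring
    _ ≤ pairEnergy q := hβ q hq

end Energy

theorem nonneg_of_forall_mul_add_sq_mul_nonneg {a c : ℝ}
    (h : ∀ t : ℝ, 0 < t → t ≤ 1 → 0 ≤ t * a + t ^ 2 * c) : 0 ≤ a := by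
  have hlim : Filter.Tendsto (fun t : ℝ => a + t * c) (nhdsWithin 0 (Set.Ioi 0)) (nhds a) :=
    tendsto_nhdsWithin_of_tendsto_nhds
      ((by fun_prop : Continuous fun t : ℝ => a + t * c).tendsto' 0 a (by simp))
  refine ge_of_tendsto hlim ?_
  filter_upwards [Ioc_mem_nhdsGT one_pos] with t ⟨ht, ht1⟩
  refine nonneg_of_mul_nonneg_right ?_ ht
  linear_combination h t ht ht1

section Minty

variable {H : Type*} [NormedAddCommGroup H] [InnerProductSpace ℝ H] [CompleteSpace H]
  {M : H → Set H}

theorem IsMaxMonotoneOp.exists_add_eq_zero (hM : IsMaxMonotoneOp M) :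
    ∃ x, ∃ u ∈ M x, x + u = 0 := by
  obtain ⟨y₀, v₀, hv₀⟩ := hM.exists_mem
  have hbdd : BddBelow (pairEnergy '' fitzpatrickEpigraph M) := by
    refine ⟨0, ?_⟩
    rintro _ ⟨p, hp, rfl⟩
    have h := hM.inner_le_of_mem_fitzpatrickEpigraph hp
    have h' := norm_add_sq_real p.1 p.2.1
    simp only [pairEnergy]
    nlinarith [sq_nonneg ‖p.1 + p.2.1‖]
  obtain ⟨⟨x, u, r⟩, hp, hmin⟩ :=
    exists_isMinOn_pairEnergy ⟨_, hM.1.mk_mem_fitzpatrickEpigraph hv₀⟩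
      convex_fitzpatrickEpigraph isClosed_fitzpatrickEpigraph hbdd
  have hxu : ⟪x, u⟫ ≤ r := hM.inner_le_of_mem_fitzpatrickEpigraph hp
  have hopt : ∀ y v, v ∈ M y → r - ⟪x, y - x⟫ - ⟪u, v - u⟫ ≤ ⟪y, v⟫ := by
    intro y v hv
    suffices 0 ≤ ⟪y, v⟫ - r + ⟪x, y - x⟫ + ⟪u, v - u⟫ by linarith
    refine nonneg_of_forall_mul_add_sq_mul_nonneg (c := (‖y - x‖ ^ 2 + ‖v - u‖ ^ 2) / 2)
      fun t ht ht1 => ?_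
    have h := isMinOn_iff.1 hmin _ (convex_fitzpatrickEpigraph.add_smul_sub_mem hp
      (hM.1.mk_mem_fitzpatrickEpigraph hv) ⟨ht.le, ht1⟩)
    rw [pairEnergy_add_smul_sub] at h
    linarith
  have hkey : ∀ y v, v ∈ M y → ‖x + u‖ ^ 2 ≤ ⟪-u - y, -x - v⟫ := by
    intro y v hv
    have h := hopt y v hv
    rw [norm_add_sq_real]
    simp only [inner_sub_left, inner_sub_right, inner_neg_left, inner_neg_right,
      real_inner_self_eq_norm_sq] at h ⊢
    linarith [real_inner_comm x u, real_inner_comm x y]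
  have hmem : -x ∈ M (-u) :=
    hM.mem_of_forall_inner_nonneg fun y v hv => (sq_nonneg _).trans (hkey y v hv)
  refine ⟨-u, -x, hmem, ?_⟩
  have h := hkey _ _ hmem
  rw [sub_self, sub_self, inner_zero_left] at h
  rw [← neg_add, add_comm, neg_eq_zero, ← norm_eq_zero]
  exact (pow_eq_zero_iff two_ne_zero).1 (h.antisymm (sq_nonneg _))

theorem IsMaxMonotoneOp.exists_add_smul_eq (hM : IsMaxMonotoneOp M) {γ : ℝ} (hγ : 0 < γ)
    (z : H) : ∃ x, ∃ u ∈ M x, x + γ • u = z := by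
  obtain ⟨x, _, ⟨u, hu, rfl⟩, hxu⟩ := (hM.image_smul_add hγ (-z)).exists_add_eq_zero
  exact ⟨x, u, hu, by rwa [← add_assoc, add_neg_eq_zero] at hxu⟩

theorem IsMaxMonotoneOp.exists_add_smul_add_eq {A : H → Set H} (hA : IsMaxMonotoneOp A)
    {B : H → H} {K : NNReal} (hB : LipschitzWith K B) {γ : ℝ} (hγ : 0 < γ) (hγK : γ * K < 1)
    (z : H) : ∃ x, ∃ a ∈ A x, x + γ • (a + B x) = z := by
  choose J W hW hJ using hA.exists_add_smul_eq hγ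
  have hJ1 := hA.1.lipschitzWith_one_of_add_smul_eq hγ.le hW hJ
  have hT : ContractingWith ⟨γ * K, by positivity⟩ fun x => J (z - γ • B x) := by
    refine ⟨hγK, LipschitzWith.of_dist_le_mul fun x y => ?_⟩
    calc dist (J (z - γ • B x)) (J (z - γ • B y))
        ≤ dist (z - γ • B x) (z - γ • B y) := by
          simpa only [NNReal.coe_one, one_mul] using hJ1.dist_le_mul _ _
      _ = γ * dist (B x) (B y) := by
          rw [dist_sub_left, dist_smul₀, Real.norm_of_nonneg hγ.le]
      _ ≤ γ * K * dist x y := by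
          rw [mul_assoc]; exact mul_le_mul_of_nonneg_left (hB.dist_le_mul x y) hγ.le
  have : Nonempty H := ⟨0⟩
  set x := ContractingWith.fixedPoint _ hT
  have hx : J (z - γ • B x) = x := hT.fixedPoint_isFixedPt
  have ha : W (z - γ • B x) ∈ A x := by simpa only [hx] using hW (z - γ • B x)
  have h : x + γ • W (z - γ • B x) = z - γ • B x := by simpa only [hx] using hJ (z - γ • B x)
  refine ⟨x, W (z - γ • B x), ha, ?_⟩
  rw [smul_add, ← add_assoc, h, sub_add_cancel]

end Minty

theorem stmt12 {H : Type*} [NormedAddCommGroup H] [InnerProductSpace ℝ H] [CompleteSpace H]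
    (A : H → Set H) (hA : IsMaxMonotoneOp A)
    (B : H → H) (μ : ℝ) (hμ : 0 ≤ μ)
    (hBmono : ∀ x y : H, 0 ≤ ⟪x - y, B x - B y⟫)
    (hBlip : ∀ x y : H, ‖B x - B y‖ ≤ μ * ‖x - y‖) :
    IsMaxMonotoneOp (fun x => (fun u => u + B x) '' A x) := by
  have hmono : IsMonotoneOp fun x => (fun u => u + B x) '' A x := by
    rintro x y _ _ ⟨a, ha, rfl⟩ ⟨b, hb, rfl⟩
    rw [add_sub_add_comm, inner_add_right]
    exact add_nonneg (hA.1 x y a b ha hb) (hBmono x y)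
  have hB : LipschitzWith ⟨μ, hμ⟩ B :=
    LipschitzWith.of_dist_le_mul fun x y => by
      rw [dist_eq_norm, dist_eq_norm]; exact hBlip x y
  have hγμ : (μ + 1)⁻¹ * μ < 1 := by
    rw [inv_mul_lt_iff₀ (by positivity)]; linarith
  refine hmono.isMaxMonotoneOp_of_forall_exists_add_smul_eq (γ := (μ + 1)⁻¹) (by positivity)
    fun z => ?_
  obtain ⟨x, a, ha, hx⟩ := hA.exists_add_smul_add_eq hB (by positivity) hγμ z
  exact ⟨x, a + B x, ⟨a, ha, rfl⟩, hx⟩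
end
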